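/- Let λ < 0, let Φ₀(r) = 2/(2+r²) and ρ₀(r) = ((2+r²)²/4) e^{−r²/4}. Then the space of C² solutions u : (1,∞) → ℝ of the eigenvalue equation −u''(r) − (4/r) u'(r) + u(r) + (r/2) u'(r) − 2r (Φ₀(r) u(r))' − 12 Φ₀(r) u(r) = λ u(r) on (1,∞) satisfying ∫₁^∞ ( u(r)² + u'(r)² ) ρ₀(r) r⁴ dr < ∞ is at most one-dimensional: any two such solutions are linearly dependent. -/

import Mathlib

/-!
Both eigenfunctions solve `u'' = p u' + q u` with `p r = r/2 - 4/r - 4r/(2+r²)`, and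
`(ρ₀ r⁴)' = -p ρ₀ r⁴`: the operator is symmetric in `L²(ρ₀ r⁴ dr)`. By Abel's identity the
weighted Wronskian `(u v' - u' v) ρ₀ r⁴` is therefore constant on `(1, ∞)`. It is bounded by
`(u² + u'² + v² + v'²) ρ₀ r⁴`, which is integrable, and a constant integrable over a half-line
vanishes; so `u v' - u' v ≡ 0`. A nontrivial combination `a u + b v` then vanishes together with
its derivative at `r = 2`, hence identically by uniqueness for the linear ODE.
-/

open MeasureTheory

noncomputable section

/-- The radial form of the ground-state profile `Φ₀(x) = 2/(2+|x|²)`. -/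
def phi0 (r : ℝ) : ℝ := 2 / (2 + r ^ 2)

/-- The radial weight `ρ₀(r) = ((2+r²)²/4) e^{−r²/4}`. -/
def rho0 (r : ℝ) : ℝ := (2 + r ^ 2) ^ 2 / 4 * Real.exp (-(r ^ 2 / 4))

open Set

theorem exists_ne_zero_combination_of_mul_sub_mul_eq_zero {K : Type*} [Field K]
    {x₀ x₁ y₀ y₁ : K} (h : x₀ * y₁ - x₁ * y₀ = 0) :
    ∃ a b : K, ¬(a = 0 ∧ b = 0) ∧ a * x₀ + b * y₀ = 0 ∧ a * x₁ + b * y₁ = 0 := by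
  obtain ⟨c, hc0, hc⟩ := (Matrix.exists_mulVec_eq_zero_iff (M := !![x₀, y₀; x₁, y₁])).mpr
    (by rw [Matrix.det_fin_two_of]; linear_combination h)
  refine ⟨c 0, c 1, fun h0 => hc0 (by ext i; fin_cases i <;> simp [h0]), ?_, ?_⟩
  · linear_combination (by simpa [Matrix.mulVec, dotProduct] using congrFun hc 0 :
      x₀ * c 0 + y₀ * c 1 = 0)
  · linear_combination (by simpa [Matrix.mulVec, dotProduct] using congrFun hc 1 :
      x₁ * c 0 + y₁ * c 1 = 0)

theorem eq_zero_of_integrableOn_const {α : Type*} [MeasurableSpace α] {μ : Measure α}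
    {s : Set α} {C : ℝ} (hs : μ s = ⊤) (h : IntegrableOn (fun _ => C) s μ) : C = 0 := by
  simpa [hs] using h

theorem abs_mul_sub_mul_le_sum_sq (a b c d : ℝ) :
    |a * d - b * c| ≤ a ^ 2 + b ^ 2 + (c ^ 2 + d ^ 2) := by
  rw [abs_le]
  constructor <;> nlinarith [sq_nonneg (a + d), sq_nonneg (a - d), sq_nonneg (b + c),
    sq_nonneg (b - c)]

theorem eqOn_zero_of_hasDerivAt_clm_apply {E : Type*} [NormedAddCommGroup E] [NormedSpace ℝ E]
    {A : ℝ → E →L[ℝ] E} {f : ℝ → E} {s : Set ℝ} (hs : s.OrdConnected) (hA : ContinuousOn A s)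
    (hf : ∀ t ∈ s, HasDerivAt f (A t (f t)) t) {t₀ : ℝ} (ht₀ : t₀ ∈ s) (hf₀ : f t₀ = 0) :
    EqOn f 0 s := by
  intro t ht
  have hsub : uIcc t₀ t ⊆ s := hs.uIcc_subset ht₀ ht
  obtain ⟨C, hC⟩ := isCompact_uIcc.exists_bound_of_continuousOn (hA.mono hsub)
  have hlip : ∀ τ ∈ uIcc t₀ t, LipschitzOnWith C.toNNReal (A τ) univ := fun τ hτ =>
    ((A τ).lipschitz.weaken (by
      rw [← NNReal.coe_le_coe, coe_nnnorm]
      exact (hC τ hτ).trans (Real.le_coe_toNNReal C))).lipschitzOnWith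
  have hcont : ContinuousOn f (uIcc t₀ t) := fun τ hτ =>
    (hf τ (hsub hτ)).continuousAt.continuousWithinAt
  rcases le_total t₀ t with h | h
  · rw [uIcc_of_le h] at hsub hlip hcont
    refine ODE_solution_unique_of_mem_Icc_right (v := fun τ => A τ) (s := fun _ => univ)
      (fun τ hτ => hlip τ (Ico_subset_Icc_self hτ)) hcont
      (fun τ hτ => (hf τ (hsub (Ico_subset_Icc_self hτ))).hasDerivWithinAt) (fun _ _ => trivial)
      continuousOn_const (fun τ _ => by simpa using (hasDerivAt_const τ (0 : E)).hasDerivWithinAt)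
      (fun _ _ => trivial) hf₀ ⟨h, le_rfl⟩
  · rw [uIcc_of_ge h] at hsub hlip hcont
    refine ODE_solution_unique_of_mem_Icc_left (v := fun τ => A τ) (s := fun _ => univ)
      (fun τ hτ => hlip τ (Ioc_subset_Icc_self hτ)) hcont
      (fun τ hτ => (hf τ (hsub (Ioc_subset_Icc_self hτ))).hasDerivWithinAt) (fun _ _ => trivial)
      continuousOn_const (fun τ _ => by simpa using (hasDerivAt_const τ (0 : E)).hasDerivWithinAt)
      (fun _ _ => trivial) hf₀ ⟨le_rfl, h⟩

def SolvesSecondOrderLinear (P Q : ℝ → ℝ) (s : Set ℝ) (u u' : ℝ → ℝ) : Prop :=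
  ∀ t ∈ s, HasDerivAt u (u' t) t ∧ HasDerivAt u' (P t * u' t + Q t * u t) t

namespace SolvesSecondOrderLinear

variable {P Q : ℝ → ℝ} {s : Set ℝ} {u u' v v' : ℝ → ℝ}

theorem linear_combination (hu : SolvesSecondOrderLinear P Q s u u')
    (hv : SolvesSecondOrderLinear P Q s v v') (a b : ℝ) :
    SolvesSecondOrderLinear P Q s (fun t => a * u t + b * v t) (fun t => a * u' t + b * v' t) :=
  fun t ht => ⟨((hu t ht).1.const_mul a).add ((hv t ht).1.const_mul b),
    (((hu t ht).2.const_mul a).add ((hv t ht).2.const_mul b)).congr_deriv (by ring)⟩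

theorem eqOn_zero (hu : SolvesSecondOrderLinear P Q s u u') (hs : s.OrdConnected)
    (hP : ContinuousOn P s) (hQ : ContinuousOn Q s) {t₀ : ℝ} (ht₀ : t₀ ∈ s)
    (h₀ : u t₀ = 0) (h₀' : u' t₀ = 0) : EqOn u 0 s := by
  let companion : ℝ → ℝ × ℝ →L[ℝ] ℝ × ℝ := fun t =>
    (ContinuousLinearMap.snd ℝ ℝ ℝ).prod
      (P t • ContinuousLinearMap.snd ℝ ℝ ℝ + Q t • ContinuousLinearMap.fst ℝ ℝ ℝ)
  have hA : ContinuousOn companion s := (ContinuousLinearMap.prodₗᵢ ℝ).continuous.comp_continuousOn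
    (continuousOn_const.prodMk ((hP.smul continuousOn_const).add (hQ.smul continuousOn_const)))
  have hf : ∀ t ∈ s, HasDerivAt (fun t => (u t, u' t)) (companion t (u t, u' t)) t := fun t ht =>
    (hu t ht).1.prodMk (hu t ht).2
  intro t ht
  simpa using congrArg Prod.fst
    (eqOn_zero_of_hasDerivAt_clm_apply hs hA hf ht₀ (by simp [h₀, h₀']) ht)

theorem hasDerivAt_wronskian (hu : SolvesSecondOrderLinear P Q s u u')
    (hv : SolvesSecondOrderLinear P Q s v v') {t : ℝ} (ht : t ∈ s) :
    HasDerivAt (fun t => u t * v' t - u' t * v t) (P t * (u t * v' t - u' t * v t)) t :=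
  (((hu t ht).1.mul (hv t ht).2).sub ((hu t ht).2.mul (hv t ht).1)).congr_deriv (by ring)

theorem wronskian_eq_zero_of_integrableOn (hu : SolvesSecondOrderLinear P Q s u u')
    (hv : SolvesSecondOrderLinear P Q s v v') (hs_open : IsOpen s) (hs_conn : IsPreconnected s)
    (hvol : volume s = ⊤) {μ : ℝ → ℝ} (hμ : ∀ t ∈ s, HasDerivAt μ (-P t * μ t) t)
    (hμ_pos : ∀ t ∈ s, 0 < μ t) (hiu : IntegrableOn (fun t => (u t ^ 2 + u' t ^ 2) * μ t) s)
    (hiv : IntegrableOn (fun t => (v t ^ 2 + v' t ^ 2) * μ t) s) {t : ℝ} (ht : t ∈ s) :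
    u t * v' t - u' t * v t = 0 := by
  set F : ℝ → ℝ := fun t => (u t * v' t - u' t * v t) * μ t
  have hF : ∀ τ ∈ s, HasDerivAt F 0 τ := fun τ hτ =>
    ((hu.hasDerivAt_wronskian hv hτ).mul (hμ τ hτ)).congr_deriv (by ring)
  have hF_const : ∀ τ ∈ s, F τ = F t := fun τ hτ =>
    hs_open.is_const_of_deriv_eq_zero hs_conn
      (fun x hx => (hF x hx).differentiableAt.differentiableWithinAt)
      (fun x hx => (hF x hx).deriv) hτ ht
  have hF_int : IntegrableOn (fun _ => F t) s := by
    refine (hiu.add hiv).mono' aestronglyMeasurable_const ?_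
    filter_upwards [ae_restrict_mem hs_open.measurableSet] with τ hτ
    rw [← hF_const τ hτ, Real.norm_eq_abs, abs_mul, abs_of_pos (hμ_pos τ hτ), Pi.add_apply,
      ← add_mul]
    exact mul_le_mul_of_nonneg_right (abs_mul_sub_mul_le_sum_sq _ _ _ _) (hμ_pos τ hτ).le
  exact (mul_eq_zero.mp (eq_zero_of_integrableOn_const hvol hF_int)).resolve_right
    (hμ_pos t ht).ne'

end SolvesSecondOrderLinear

def radialDrift (r : ℝ) : ℝ := r / 2 - 4 / r - 4 * r / (2 + r ^ 2)

def radialPotential (l r : ℝ) : ℝ := 1 - l + 8 * r ^ 2 / (2 + r ^ 2) ^ 2 - 24 / (2 + r ^ 2)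

theorem continuousOn_radialDrift : ContinuousOn radialDrift (Ioi 0) := by
  intro r (hr : 0 < r)
  unfold radialDrift
  fun_prop (disch := positivity)

theorem continuous_radialPotential (l : ℝ) : Continuous (radialPotential l) := by
  unfold radialPotential
  fun_prop (disch := intro; positivity)

theorem hasDerivAt_phi0 (r : ℝ) : HasDerivAt phi0 (-4 * r / (2 + r ^ 2) ^ 2) r := by
  have hd : HasDerivAt (fun s : ℝ => 2 + s ^ 2) (2 * r) r := by
    simpa using (hasDerivAt_pow 2 r).const_add 2
  refine ((hasDerivAt_const r (2 : ℝ)).div hd (by positivity)).congr_deriv ?_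
  field_simp
  ring

theorem hasDerivAt_rho0_mul_pow_four {r : ℝ} (hr : r ≠ 0) :
    HasDerivAt (fun s => rho0 s * s ^ 4) (-radialDrift r * (rho0 r * r ^ 4)) r := by
  have hd : HasDerivAt (fun s : ℝ => 2 + s ^ 2) (2 * r) r := by
    simpa using (hasDerivAt_pow 2 r).const_add 2
  have he : HasDerivAt (fun s : ℝ => -(s ^ 2 / 4)) (-(2 * r / 4)) r := by
    simpa using ((hasDerivAt_pow 2 r).div_const 4).fun_neg
  refine ((((hd.fun_pow 2).div_const 4).fun_mul he.exp).fun_mul (hasDerivAt_pow 4 r)).congr_deriv ?_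
  unfold rho0 radialDrift
  field_simp
  ring

theorem solvesSecondOrderLinear_of_eigen_equation {l c : ℝ} (hc : 0 ≤ c) {u : ℝ → ℝ}
    (hu : ContDiffOn ℝ 2 u (Ioi c))
    (hode : ∀ r : ℝ, c < r →
      -(deriv (deriv u) r) - (4 / r) * deriv u r + u r + (r / 2) * deriv u r
        - 2 * r * deriv (fun s => phi0 s * u s) r - 12 * phi0 r * u r = l * u r) :
    SolvesSecondOrderLinear radialDrift (radialPotential l) (Ioi c) u (deriv u) := by
  intro r (hr : c < r)
  have hr0 : r ≠ 0 := (hc.trans_lt hr).ne'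
  have hnhds : Ioi c ∈ nhds r := isOpen_Ioi.mem_nhds hr
  have hu₁ : HasDerivAt u (deriv u r) r :=
    ((hu.contDiffAt hnhds).differentiableAt (by norm_num)).hasDerivAt
  have hu₂ : HasDerivAt (deriv u) (deriv (deriv u) r) r :=
    (((hu.deriv_of_isOpen (m := 1) isOpen_Ioi (by norm_num)).contDiffAt hnhds).differentiableAt
      (by norm_num)).hasDerivAt
  refine ⟨hu₁, hu₂.congr_deriv ?_⟩
  have h := hode r hr
  rw [((hasDerivAt_phi0 r).fun_mul hu₁).deriv] at h
  unfold phi0 at h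
  unfold radialDrift radialPotential
  field_simp at h ⊢
  linarith

theorem eigenspace_at_most_one_dimensional_general
    (l : ℝ) (u v : ℝ → ℝ)
    (hu : ContDiffOn ℝ 2 u (Set.Ioi (1 : ℝ)))
    (hv : ContDiffOn ℝ 2 v (Set.Ioi (1 : ℝ)))
    (hodeu : ∀ r : ℝ, 1 < r →
      -(deriv (deriv u) r) - (4 / r) * deriv u r + u r + (r / 2) * deriv u r
        - 2 * r * deriv (fun s => phi0 s * u s) r - 12 * phi0 r * u r = l * u r)
    (hodev : ∀ r : ℝ, 1 < r →
      -(deriv (deriv v) r) - (4 / r) * deriv v r + v r + (r / 2) * deriv v r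
        - 2 * r * deriv (fun s => phi0 s * v s) r - 12 * phi0 r * v r = l * v r)
    (hintu : IntegrableOn (fun r => (u r ^ 2 + deriv u r ^ 2) * rho0 r * r ^ 4)
      (Set.Ioi (1 : ℝ)))
    (hintv : IntegrableOn (fun r => (v r ^ 2 + deriv v r ^ 2) * rho0 r * r ^ 4)
      (Set.Ioi (1 : ℝ))) :
    ∃ a b : ℝ, ¬(a = 0 ∧ b = 0) ∧ ∀ r : ℝ, 1 < r → a * u r + b * v r = 0 := by
  have hsu := solvesSecondOrderLinear_of_eigen_equation zero_le_one hu hodeu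
  have hsv := solvesSecondOrderLinear_of_eigen_equation zero_le_one hv hodev
  have h2 : (2 : ℝ) ∈ Ioi 1 := mem_Ioi.mpr one_lt_two
  have hweight : ∀ r ∈ Ioi (1 : ℝ),
      HasDerivAt (fun s => rho0 s * s ^ 4) (-radialDrift r * (rho0 r * r ^ 4)) r :=
    fun r (hr : 1 < r) => hasDerivAt_rho0_mul_pow_four (by positivity)
  have hweight_pos : ∀ r ∈ Ioi (1 : ℝ), 0 < rho0 r * r ^ 4 := fun r (hr : 1 < r) => by
    unfold rho0; positivity
  have hW : u 2 * deriv v 2 - deriv u 2 * v 2 = 0 :=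
    hsu.wronskian_eq_zero_of_integrableOn hsv isOpen_Ioi isPreconnected_Ioi (by simp) hweight
      hweight_pos (by simpa only [mul_assoc] using hintu) (by simpa only [mul_assoc] using hintv) h2
  obtain ⟨a, b, hab, h₀, h₁⟩ := exists_ne_zero_combination_of_mul_sub_mul_eq_zero hW
  exact ⟨a, b, hab, fun r hr => (hsu.linear_combination hsv a b).eqOn_zero ordConnected_Ioi
    (continuousOn_radialDrift.mono (Ioi_subset_Ioi zero_le_one))
    (continuous_radialPotential l).continuousOn h2 h₀ h₁ hr⟩

/-- For `λ < 0`, the space of `H¹_{ρ₀}` solutions of the eigenvalue equation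
`(L₀ − λ)u = 0` on `(1,∞)` is at most one-dimensional: any two such solutions are
linearly dependent. -/
theorem eigenspace_at_most_one_dimensional
    (l : ℝ) (hl : l < 0) (u v : ℝ → ℝ)
    (hu : ContDiffOn ℝ 2 u (Set.Ioi (1 : ℝ)))
    (hv : ContDiffOn ℝ 2 v (Set.Ioi (1 : ℝ)))
    (hodeu : ∀ r : ℝ, 1 < r →
      -(deriv (deriv u) r) - (4 / r) * deriv u r + u r + (r / 2) * deriv u r
        - 2 * r * deriv (fun s => phi0 s * u s) r - 12 * phi0 r * u r = l * u r)
    (hodev : ∀ r : ℝ, 1 < r →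
      -(deriv (deriv v) r) - (4 / r) * deriv v r + v r + (r / 2) * deriv v r
        - 2 * r * deriv (fun s => phi0 s * v s) r - 12 * phi0 r * v r = l * v r)
    (hintu : IntegrableOn (fun r => (u r ^ 2 + deriv u r ^ 2) * rho0 r * r ^ 4)
      (Set.Ioi (1 : ℝ)))
    (hintv : IntegrableOn (fun r => (v r ^ 2 + deriv v r ^ 2) * rho0 r * r ^ 4)
      (Set.Ioi (1 : ℝ))) :
    ∃ a b : ℝ, ¬(a = 0 ∧ b = 0) ∧ ∀ r : ℝ, 1 < r → a * u r + b * v r = 0 :=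
  eigenspace_at_most_one_dimensional_general l u v hu hv hodeu hodev hintu hintv
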